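/- arXiv:1604.08909 — 4 statements merged into one kernel-verified Lean document; each statement's English description precedes it below -/
import Mathlib

section
/- Let G be a po-group with RDP that has wRDP, i.e., for every equation u₁+u₂ = v₁+v₂ of elements of G there exist d₁,d₂ ∈ G with d₁ ≤ u₁, d₁ ≤ v₂, d₂ ≤ u₂, d₂ ≤ v₁, d₁+d₂ = d₂+d₁, and −u₁+v₁ = −d₁+d₂. Then G is directed, and for every po-group A with RDP the lexicographic product A ×⃗ G satisfies RDP. -/
/-!
A positive element of `A ×ₗ G` is some `(a, g)` with `a > 0`, or with `a = 0` and `g ≥ 0`. After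
decomposing the `A`-components by RDP of `A`, it remains to decompose `g₁ + g₂ = h₁ + h₂` in `G`
with positive entries required exactly where the `A`-entry vanishes; a row or column whose
entries are all required has positive sum. If neither off-diagonal entry is required, wRDP for
the equation itself gives positive diagonal entries; if exactly one is, it can be taken to be `0`.
If both are, RDP of `G` applies after shifting an unrequired corner into the positive cone by
directedness, and if neither corner is required either, it suffices to write `-g₁ + h₁ = -p + q`
with commuting `p, q ≥ 0`, which wRDP for `0 + (x + x) = x + x` provides. Directedness comes from
wRDP for `x + (-x + y) = 0 + y`, which gives a common lower bound of `x` and `y`.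
-/

/-- A po-group satisfies RDP if every equation `a₁ + a₂ = b₁ + b₂` of positive elements
admits a Riesz decomposition by four positive elements. -/
def RDP (G : Type*) [AddGroup G] [PartialOrder G] : Prop :=
  ∀ a₁ a₂ b₁ b₂ : G, 0 ≤ a₁ → 0 ≤ a₂ → 0 ≤ b₁ → 0 ≤ b₂ → a₁ + a₂ = b₁ + b₂ →
    ∃ c₁₁ c₁₂ c₂₁ c₂₂ : G, 0 ≤ c₁₁ ∧ 0 ≤ c₁₂ ∧ 0 ≤ c₂₁ ∧ 0 ≤ c₂₂ ∧
      a₁ = c₁₁ + c₁₂ ∧ a₂ = c₂₁ + c₂₂ ∧ b₁ = c₁₁ + c₂₁ ∧ b₂ = c₁₂ + c₂₂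

/-- A po-group has wRDP if for each equation `u₁ + u₂ = v₁ + v₂` there are `d₁, d₂` with
`d₁ ≤ u₁, v₂`, `d₂ ≤ u₂, v₁`, `d₁ + d₂ = d₂ + d₁` and `-u₁ + v₁ = -d₁ + d₂`. -/
def wRDP (G : Type*) [AddGroup G] [PartialOrder G] : Prop :=
  ∀ u₁ u₂ v₁ v₂ : G, u₁ + u₂ = v₁ + v₂ →
    ∃ d₁ d₂ : G, d₁ ≤ u₁ ∧ d₁ ≤ v₂ ∧ d₂ ≤ u₂ ∧ d₂ ≤ v₁ ∧
      d₁ + d₂ = d₂ + d₁ ∧ -u₁ + v₁ = -d₁ + d₂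

abbrev IsDecomposition {α : Type*} [Add α] (g₁ g₂ h₁ h₂ k₁₁ k₁₂ k₂₁ k₂₂ : α) : Prop :=
  g₁ = k₁₁ + k₁₂ ∧ g₂ = k₂₁ + k₂₂ ∧ h₁ = k₁₁ + k₂₁ ∧ h₂ = k₁₂ + k₂₂

section Decomposition

variable {G : Type*} [AddGroup G] [PartialOrder G] {g₁ g₂ h₁ h₂ : G}

theorem wRDP.exists_le_le (hw : wRDP G) (x y : G) : ∃ d, d ≤ x ∧ d ≤ y := by
  obtain ⟨d, -, hx, hy, -⟩ := hw x (-x + y) 0 y (by simp)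
  exact ⟨d, hx, hy⟩

theorem wRDP.isDirectedOrder [AddLeftMono G] [AddRightMono G] (hw : wRDP G) :
    IsDirectedOrder G where
  directed x y :=
    have ⟨d, hx, hy⟩ := hw.exists_le_le (-x) (-y)
    ⟨-d, le_neg_of_le_neg hx, le_neg_of_le_neg hy⟩

theorem wRDP.exists_addCommute_le_zero_le (hw : wRDP G) (x : G) :
    ∃ d, d ≤ 0 ∧ d ≤ x ∧ AddCommute d x := by
  obtain ⟨d, e, hd₀, hdx, -, -, hde, hx⟩ := hw 0 (x + x) x x (by simp)
  obtain rfl : e = d + x := by rw [neg_zero, zero_add] at hx; rw [hx, add_neg_cancel_left]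
  refine ⟨d, hd₀, hdx, add_left_cancel (a := d) ?_⟩
  simpa only [add_assoc] using hde

theorem wRDP.exists_decomposition_antidiag [AddLeftMono G] (hw : wRDP G)
    (hs : g₁ + g₂ = h₁ + h₂) :
    ∃ k₁₁ k₁₂ k₂₁ k₂₂ : G, 0 ≤ k₁₂ ∧ 0 ≤ k₂₁ ∧ IsDecomposition g₁ g₂ h₁ h₂ k₁₁ k₁₂ k₂₁ k₂₂ := by
  obtain ⟨d, hd₀, hdx, hcomm⟩ := hw.exists_addCommute_le_zero_le (-g₁ + h₁)
  have hh₂ : h₂ = -h₁ + g₁ + g₂ := by rw [add_assoc, hs, neg_add_cancel_left]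
  refine ⟨g₁ + d, -d, -d + (-g₁ + h₁), -(-g₁ + h₁) + d + g₂, Left.nonneg_neg_iff.2 hd₀,
    le_neg_add_iff_le.2 hdx, by simp, by simp [add_assoc], by simp [add_assoc], ?_⟩
  -- the off-diagonal entries commute because `d` commutes with `-g₁ + h₁`
  rw [← add_assoc, ← add_assoc, ((hcomm.neg_left).neg_right).eq, hh₂]
  simp [add_assoc]

theorem wRDP.exists_decomposition_diag [AddLeftMono G] [AddRightMono G] (hw : wRDP G)
    (hs : g₁ + g₂ = h₁ + h₂) :
    ∃ k₁₁ k₁₂ k₂₁ k₂₂ : G, 0 ≤ k₁₁ ∧ 0 ≤ k₂₂ ∧ IsDecomposition g₁ g₂ h₁ h₂ k₁₁ k₁₂ k₂₁ k₂₂ := by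
  obtain ⟨d₁, d₂, hd₁, -, hd₂, -, hcomm, hrel⟩ := hw g₁ g₂ h₁ h₂ hs
  have hh₁ : h₁ = g₁ + (-d₁ + d₂) := by rw [← hrel, add_neg_cancel_left]
  have hh₂ : h₂ = -h₁ + g₁ + g₂ := by rw [add_assoc, hs, neg_add_cancel_left]
  refine ⟨g₁ - d₁, d₁, d₂, -d₂ + g₂, sub_nonneg.2 hd₁, le_neg_add_iff_le.2 hd₂, by simp,
    by simp, by rw [hh₁, sub_eq_add_neg, add_assoc], ?_⟩
  rw [hh₂, hh₁, ← add_assoc d₁, (AddCommute.neg_right hcomm).eq]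
  simp [add_assoc]

theorem RDP.exists_decomposition_of_nonneg_fst [AddLeftMono G] [IsDirectedOrder G] (hG : RDP G)
    (hs : g₁ + g₂ = h₁ + h₂) (hg₁ : 0 ≤ g₁) (hh₁ : 0 ≤ h₁) :
    ∃ k₁₁ k₁₂ k₂₁ k₂₂ : G, 0 ≤ k₁₁ ∧ 0 ≤ k₁₂ ∧ 0 ≤ k₂₁ ∧
      IsDecomposition g₁ g₂ h₁ h₂ k₁₁ k₁₂ k₂₁ k₂₂ := by
  obtain ⟨w, hgw, hhw⟩ := exists_ge_ge (-g₂) (-h₂)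
  obtain ⟨k₁₁, k₁₂, k₂₁, k₂₂, hk₁₁, hk₁₂, hk₂₁, -, e₁, e₂, e₃, e₄⟩ :=
    hG g₁ (g₂ + w) h₁ (h₂ + w) hg₁ (neg_le_iff_add_nonneg'.1 hgw) hh₁
      (neg_le_iff_add_nonneg'.1 hhw) (by rw [← add_assoc, hs, add_assoc])
  refine ⟨k₁₁, k₁₂, k₂₁, k₂₂ - w, hk₁₁, hk₁₂, hk₂₁, e₁, ?_, e₃, ?_⟩
  · rw [← add_sub_assoc, ← e₂, add_sub_cancel_right]
  · rw [← add_sub_assoc, ← e₄, add_sub_cancel_right]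

theorem RDP.exists_decomposition_of_nonneg_snd [AddRightMono G] [IsDirectedOrder G] (hG : RDP G)
    (hs : g₁ + g₂ = h₁ + h₂) (hg₂ : 0 ≤ g₂) (hh₂ : 0 ≤ h₂) :
    ∃ k₁₁ k₁₂ k₂₁ k₂₂ : G, 0 ≤ k₁₂ ∧ 0 ≤ k₂₁ ∧ 0 ≤ k₂₂ ∧
      IsDecomposition g₁ g₂ h₁ h₂ k₁₁ k₁₂ k₂₁ k₂₂ := by
  obtain ⟨w, hgw, hhw⟩ := exists_ge_ge (-g₁) (-h₁)
  obtain ⟨k₁₁, k₁₂, k₂₁, k₂₂, -, hk₁₂, hk₂₁, hk₂₂, e₁, e₂, e₃, e₄⟩ :=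
    hG (w + g₁) g₂ (w + h₁) h₂ (neg_le_iff_add_nonneg.1 hgw) hg₂
      (neg_le_iff_add_nonneg.1 hhw) hh₂ (by rw [add_assoc, hs, add_assoc])
  refine ⟨-w + k₁₁, k₁₂, k₂₁, k₂₂, hk₁₂, hk₂₁, hk₂₂, ?_, e₂, ?_, e₄⟩
  · rw [add_assoc, ← e₁, neg_add_cancel_left]
  · rw [add_assoc, ← e₃, neg_add_cancel_left]

theorem exists_decomposition_nonneg_of_imp [AddLeftMono G] [AddRightMono G] (hG : RDP G)
    (hw : wRDP G) (hs : g₁ + g₂ = h₁ + h₂) {p₁₁ p₁₂ p₂₁ p₂₂ : Prop}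
    (hg₁ : p₁₁ → p₁₂ → 0 ≤ g₁) (hg₂ : p₂₁ → p₂₂ → 0 ≤ g₂)
    (hh₁ : p₁₁ → p₂₁ → 0 ≤ h₁) (hh₂ : p₁₂ → p₂₂ → 0 ≤ h₂) :
    ∃ k₁₁ k₁₂ k₂₁ k₂₂ : G, (p₁₁ → 0 ≤ k₁₁) ∧ (p₁₂ → 0 ≤ k₁₂) ∧ (p₂₁ → 0 ≤ k₂₁) ∧
      (p₂₂ → 0 ≤ k₂₂) ∧ IsDecomposition g₁ g₂ h₁ h₂ k₁₁ k₁₂ k₂₁ k₂₂ := by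
  have := hw.isDirectedOrder
  by_cases h₁₂ : p₁₂ <;> by_cases h₂₁ : p₂₁
  · by_cases h₁₁ : p₁₁ <;> by_cases h₂₂ : p₂₂
    · obtain ⟨k₁₁, k₁₂, k₂₁, k₂₂, hk₁₁, hk₁₂, hk₂₁, hk₂₂, hk⟩ :=
        hG _ _ _ _ (hg₁ h₁₁ h₁₂) (hg₂ h₂₁ h₂₂) (hh₁ h₁₁ h₂₁) (hh₂ h₁₂ h₂₂) hs
      exact ⟨k₁₁, k₁₂, k₂₁, k₂₂, fun _ ↦ hk₁₁, fun _ ↦ hk₁₂, fun _ ↦ hk₂₁, fun _ ↦ hk₂₂, hk⟩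
    · obtain ⟨k₁₁, k₁₂, k₂₁, k₂₂, hk₁₁, hk₁₂, hk₂₁, hk⟩ :=
        hG.exists_decomposition_of_nonneg_fst hs (hg₁ h₁₁ h₁₂) (hh₁ h₁₁ h₂₁)
      exact ⟨k₁₁, k₁₂, k₂₁, k₂₂, fun _ ↦ hk₁₁, fun _ ↦ hk₁₂, fun _ ↦ hk₂₁, (h₂₂ · |>.elim), hk⟩
    · obtain ⟨k₁₁, k₁₂, k₂₁, k₂₂, hk₁₂, hk₂₁, hk₂₂, hk⟩ :=
        hG.exists_decomposition_of_nonneg_snd hs (hg₂ h₂₁ h₂₂) (hh₂ h₁₂ h₂₂)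
      exact ⟨k₁₁, k₁₂, k₂₁, k₂₂, (h₁₁ · |>.elim), fun _ ↦ hk₁₂, fun _ ↦ hk₂₁, fun _ ↦ hk₂₂, hk⟩
    · obtain ⟨k₁₁, k₁₂, k₂₁, k₂₂, hk₁₂, hk₂₁, hk⟩ := hw.exists_decomposition_antidiag hs
      exact ⟨k₁₁, k₁₂, k₂₁, k₂₂, (h₁₁ · |>.elim), fun _ ↦ hk₁₂, fun _ ↦ hk₂₁, (h₂₂ · |>.elim), hk⟩
  · refine ⟨g₁, 0, -g₁ + h₁, h₂, (hg₁ · h₁₂), fun _ ↦ le_rfl, (h₂₁ · |>.elim), (hh₂ h₁₂ ·),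
      (add_zero g₁).symm, ?_, (add_neg_cancel_left g₁ h₁).symm, (zero_add h₂).symm⟩
    rw [add_assoc, ← hs, neg_add_cancel_left]
  · refine ⟨h₁, -h₁ + g₁, 0, g₂, (hh₁ · h₂₁), (h₁₂ · |>.elim), fun _ ↦ le_rfl, (hg₂ h₂₁ ·),
      (add_neg_cancel_left h₁ g₁).symm, (zero_add g₂).symm, (add_zero h₁).symm, ?_⟩
    rw [add_assoc, hs, neg_add_cancel_left]
  · obtain ⟨k₁₁, k₁₂, k₂₁, k₂₂, hk₁₁, hk₂₂, hk⟩ := hw.exists_decomposition_diag hs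
    exact ⟨k₁₁, k₁₂, k₂₁, k₂₂, fun _ ↦ hk₁₁, (h₁₂ · |>.elim), (h₂₁ · |>.elim), fun _ ↦ hk₂₂, hk⟩

end Decomposition

theorem Prod.Lex.toLex_nonneg_iff {A B : Type*} [Zero A] [PartialOrder A] [Zero B] [LE B]
    {a : A} {b : B} : 0 ≤ toLex (a, b) ↔ 0 ≤ a ∧ (a = 0 → 0 ≤ b) := by
  rw [Prod.Lex.le_iff]
  rcases eq_or_ne a 0 with rfl | ha
  · simp
  · simp [ha, ha.symm, lt_iff_le_and_ne]

theorem RDP.lex {A G : Type*} [AddGroup A] [PartialOrder A] [AddGroup G] [PartialOrder G]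
    [AddLeftMono G] [AddRightMono G] (hA : RDP A) (hG : RDP G) (hw : wRDP G) :
    RDP (A ×ₗ G) := by
  intro x₁ x₂ y₁ y₂ hx₁ hx₂ hy₁ hy₂ hs
  obtain ⟨⟨a₁, g₁⟩, rfl⟩ := toLex.surjective x₁
  obtain ⟨⟨a₂, g₂⟩, rfl⟩ := toLex.surjective x₂
  obtain ⟨⟨b₁, h₁⟩, rfl⟩ := toLex.surjective y₁
  obtain ⟨⟨b₂, h₂⟩, rfl⟩ := toLex.surjective y₂
  simp only [Prod.Lex.toLex_nonneg_iff] at hx₁ hx₂ hy₁ hy₂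
  simp only [← toLex_add, Prod.mk_add_mk, toLex_inj, Prod.mk.injEq] at hs
  obtain ⟨c₁₁, c₁₂, c₂₁, c₂₂, hc₁₁, hc₁₂, hc₂₁, hc₂₂, ea₁, ea₂, eb₁, eb₂⟩ :=
    hA _ _ _ _ hx₁.1 hx₂.1 hy₁.1 hy₂.1 hs.1
  obtain ⟨k₁₁, k₁₂, k₂₁, k₂₂, hk₁₁, hk₁₂, hk₂₁, hk₂₂, eg₁, eg₂, eh₁, eh₂⟩ :=
    exists_decomposition_nonneg_of_imp hG hw hs.2 (p₁₁ := c₁₁ = 0) (p₁₂ := c₁₂ = 0)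
      (p₂₁ := c₂₁ = 0) (p₂₂ := c₂₂ = 0)
      (fun h h' ↦ hx₁.2 (by rw [ea₁, h, h', add_zero]))
      (fun h h' ↦ hx₂.2 (by rw [ea₂, h, h', add_zero]))
      (fun h h' ↦ hy₁.2 (by rw [eb₁, h, h', add_zero]))
      (fun h h' ↦ hy₂.2 (by rw [eb₂, h, h', add_zero]))
  refine ⟨toLex (c₁₁, k₁₁), toLex (c₁₂, k₁₂), toLex (c₂₁, k₂₁), toLex (c₂₂, k₂₂),
    Prod.Lex.toLex_nonneg_iff.2 ⟨hc₁₁, hk₁₁⟩, Prod.Lex.toLex_nonneg_iff.2 ⟨hc₁₂, hk₁₂⟩,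
    Prod.Lex.toLex_nonneg_iff.2 ⟨hc₂₁, hk₂₁⟩, Prod.Lex.toLex_nonneg_iff.2 ⟨hc₂₂, hk₂₂⟩, ?_⟩
  simp only [← toLex_add, Prod.mk_add_mk, toLex_inj, Prod.mk.injEq]
  exact ⟨⟨ea₁, eg₁⟩, ⟨ea₂, eg₂⟩, ⟨eb₁, eh₁⟩, ⟨eb₂, eh₂⟩⟩

/-- If `G` is a po-group with RDP having wRDP, then `G` is directed and,
for every po-group `A` with RDP, the lexicographic product `A ×ₗ G` satisfies RDP. -/
theorem directed_and_rdp_lex_of_wRDP {G : Type*}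
    [AddGroup G] [PartialOrder G]
    [CovariantClass G G (· + ·) (· ≤ ·)]
    [CovariantClass G G (Function.swap (· + ·)) (· ≤ ·)]
    (hG : RDP G) (hw : wRDP G) :
    (∀ x y : G, ∃ z : G, x ≤ z ∧ y ≤ z) ∧
    (∀ (A : Type u) [AddGroup A] [PartialOrder A]
      [CovariantClass A A (· + ·) (· ≤ ·)]
      [CovariantClass A A (Function.swap (· + ·)) (· ≤ ·)],
      RDP A → RDP (A ×ₗ G)) :=
  ⟨hw.isDirectedOrder.directed, fun _ _ _ _ _ hA ↦ hA.lex hG hw⟩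
end

section
/- Let H be a directed po-group with RDP, and consider the lexicographic product H ×⃗ ℝ (ℝ with its usual order). Then H ×⃗ ℝ satisfies RDP, and for any two strictly positive elements x,y of H ×⃗ ℝ with x+y = y+x there exists d ∈ H ×⃗ ℝ with 0 < d ≤ x, d ≤ y and −x+d+x = −y+d+y. -/
/-!
Decompose the `H`-coordinates of `(a, s) + (b, t) = (c, u) + (d, v)` into `cᵢⱼ` by RDP in `H`.
The `K`-coordinates must then be `m, s - m, u - m, m - (u - t)` for a free `m`, and `(cᵢⱼ, k)`
is positive whenever `cᵢⱼ > 0`, so `m` only has to meet the bounds attached to vanishing `cᵢⱼ`.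
Two of these bounds interact only when a whole row or column of `(cᵢⱼ)` vanishes, and then
the corresponding one of `s, t, u, v` is nonnegative, which is exactly their compatibility.

The element `(0, t)` with `t > 0` is central, and lies below any positive element once `t` is
small enough.
-/

theorem exists_between_of_conditional_bounds {α : Type*} [LinearOrder α]
    {p₁ p₂ q₁ q₂ : Prop} {l₁ l₂ u₁ u₂ : α}
    (h₁₁ : p₁ → q₁ → l₁ ≤ u₁) (h₁₂ : p₁ → q₂ → l₁ ≤ u₂)
    (h₂₁ : p₂ → q₁ → l₂ ≤ u₁) (h₂₂ : p₂ → q₂ → l₂ ≤ u₂) :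
    ∃ m, (p₁ → l₁ ≤ m) ∧ (p₂ → l₂ ≤ m) ∧ (q₁ → m ≤ u₁) ∧ (q₂ → m ≤ u₂) := by
  by_cases hp₁ : p₁ <;> by_cases hp₂ : p₂
  · exact ⟨max l₁ l₂, fun _ ↦ le_max_left _ _, fun _ ↦ le_max_right _ _,
      fun hq ↦ max_le (h₁₁ hp₁ hq) (h₂₁ hp₂ hq), fun hq ↦ max_le (h₁₂ hp₁ hq) (h₂₂ hp₂ hq)⟩
  · exact ⟨l₁, fun _ ↦ le_rfl, fun h ↦ absurd h hp₂, h₁₁ hp₁, h₁₂ hp₁⟩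
  · exact ⟨l₂, fun h ↦ absurd h hp₁, fun _ ↦ le_rfl, h₂₁ hp₂, h₂₂ hp₂⟩
  · exact ⟨min u₁ u₂, fun h ↦ absurd h hp₁, fun h ↦ absurd h hp₂, fun _ ↦ min_le_left _ _,
      fun _ ↦ min_le_right _ _⟩

namespace Prod.Lex

variable {H K : Type*}

theorem zero_le_toLex_iff [Zero H] [PartialOrder H] [Zero K] [Preorder K] {a : H} {s : K} :
    0 ≤ toLex (a, s) ↔ 0 ≤ a ∧ (a = 0 → 0 ≤ s) :=
  toLex_le_toLex'.trans (and_congr_right' (imp_congr_left eq_comm))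

theorem rdp [AddGroup H] [PartialOrder H] [AddCommGroup K] [LinearOrder K]
    [IsOrderedAddMonoid K] (hH : RDP H) : RDP (H ×ₗ K) := by
  intro x₁ x₂ y₁ y₂ hx₁ hx₂ hy₁ hy₂ hxy
  obtain ⟨⟨a, s⟩, rfl⟩ := toLex.surjective x₁
  obtain ⟨⟨b, t⟩, rfl⟩ := toLex.surjective x₂
  obtain ⟨⟨c, u⟩, rfl⟩ := toLex.surjective y₁
  obtain ⟨⟨d, v⟩, rfl⟩ := toLex.surjective y₂
  rw [zero_le_toLex_iff] at hx₁ hx₂ hy₁ hy₂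
  rw [← toLex_add, ← toLex_add, toLex_inj, Prod.mk_add_mk, Prod.mk_add_mk, Prod.mk.injEq] at hxy
  obtain ⟨hxyH, hxyK⟩ := hxy
  obtain ⟨c₁₁, c₁₂, c₂₁, c₂₂, h₁₁, h₁₂, h₂₁, h₂₂, rfl, rfl, rfl, rfl⟩ :=
    hH a b c d hx₁.1 hx₂.1 hy₁.1 hy₂.1 hxyH
  obtain ⟨m, hm₁₁, hm₂₂, hm₁₂, hm₂₁⟩ := exists_between_of_conditional_bounds
    (p₁ := c₁₁ = 0) (p₂ := c₂₂ = 0) (q₁ := c₁₂ = 0) (q₂ := c₂₁ = 0)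
    (l₁ := 0) (l₂ := u - t) (u₁ := s) (u₂ := u)
    (fun h h' ↦ hx₁.2 (by rw [h, h', add_zero]))
    (fun h h' ↦ hy₁.2 (by rw [h, h', add_zero]))
    (fun h h' ↦ sub_le_iff_le_add.2 <|
      hxyK ▸ le_add_of_nonneg_right (hy₂.2 (by rw [h, h', add_zero])))
    (fun h h' ↦ sub_le_self u (hx₂.2 (by rw [h, h', add_zero])))
  refine ⟨toLex (c₁₁, m), toLex (c₁₂, s - m), toLex (c₂₁, u - m), toLex (c₂₂, m - (u - t)),
    zero_le_toLex_iff.2 ⟨h₁₁, hm₁₁⟩, zero_le_toLex_iff.2 ⟨h₁₂, fun h ↦ sub_nonneg.2 (hm₁₂ h)⟩,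
    zero_le_toLex_iff.2 ⟨h₂₁, fun h ↦ sub_nonneg.2 (hm₂₁ h)⟩,
    zero_le_toLex_iff.2 ⟨h₂₂, fun h ↦ sub_nonneg.2 (hm₂₂ h)⟩, ?_, ?_, ?_, ?_⟩ <;>
  rw [← toLex_add, Prod.mk_add_mk] <;> congr 2
  · rw [add_sub_cancel]
  · rw [sub_add_sub_cancel, sub_sub_cancel]
  · rw [add_sub_cancel]
  · rw [sub_add_sub_cancel, sub_sub_eq_add_sub, hxyK, add_sub_cancel_left]

theorem exists_toLex_zero_le_of_pos [Zero H] [Preorder H] [Zero K] [Preorder K] [NoMaxOrder K]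
    {x : H ×ₗ K} (hx : 0 < x) : ∃ t > 0, toLex (0, t) ≤ x := by
  obtain ⟨⟨a, s⟩, rfl⟩ := toLex.surjective x
  rcases toLex_lt_toLex.1 hx with ha | ⟨ha, hs⟩
  · obtain ⟨t, ht⟩ := exists_gt (0 : K)
    exact ⟨t, ht, toLex_le_toLex.2 (Or.inl ha)⟩
  · exact ⟨s, hs, toLex_le_toLex.2 (Or.inr ⟨ha, le_rfl⟩)⟩

theorem exists_toLex_zero_le_of_pos_of_pos [Zero H] [Preorder H] [Zero K] [LinearOrder K]
    [NoMaxOrder K] {x y : H ×ₗ K} (hx : 0 < x) (hy : 0 < y) :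
    ∃ t > 0, toLex (0, t) ≤ x ∧ toLex (0, t) ≤ y := by
  obtain ⟨t₁, ht₁, hx⟩ := exists_toLex_zero_le_of_pos hx
  obtain ⟨t₂, ht₂, hy⟩ := exists_toLex_zero_le_of_pos hy
  have mono : Monotone fun t : K ↦ toLex ((0 : H), t) :=
    fun _ _ h ↦ toLex_le_toLex.2 (Or.inr ⟨rfl, h⟩)
  exact ⟨min t₁ t₂, lt_min ht₁ ht₂, (mono (min_le_left _ _)).trans hx,
    (mono (min_le_right _ _)).trans hy⟩

theorem neg_add_toLex_zero_add [AddGroup H] [AddCommGroup K] (x : H ×ₗ K) (t : K) :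
    -x + toLex (0, t) + x = toLex (0, t) := by
  obtain ⟨⟨a, s⟩, rfl⟩ := toLex.surjective x
  rw [← toLex_neg, ← toLex_add, ← toLex_add, Prod.neg_mk, Prod.mk_add_mk, Prod.mk_add_mk,
    add_zero, neg_add_cancel, neg_add_cancel_comm]

end Prod.Lex

theorem lex_real_rdp_and_conjugate_lower_bounds_general {H : Type*}
    [AddGroup H] [PartialOrder H]
    (hH : RDP H) :
    RDP (H ×ₗ ℝ) ∧
    ∀ x y : H ×ₗ ℝ, 0 < x → 0 < y → x + y = y + x →
      ∃ d : H ×ₗ ℝ, 0 < d ∧ d ≤ x ∧ d ≤ y ∧ -x + d + x = -y + d + y := by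
  refine ⟨Prod.Lex.rdp hH, fun x y hx hy _ ↦ ?_⟩
  obtain ⟨t, ht, hdx, hdy⟩ := Prod.Lex.exists_toLex_zero_le_of_pos_of_pos hx hy
  refine ⟨toLex (0, t), Prod.Lex.toLex_lt_toLex.2 (Or.inr ⟨rfl, ht⟩), hdx, hdy, ?_⟩
  rw [Prod.Lex.neg_add_toLex_zero_add, Prod.Lex.neg_add_toLex_zero_add]

/-- If `H` is a directed po-group with RDP, then the lexicographic product
`H ×ₗ ℝ` satisfies RDP and, for any two strictly positive `x, y ∈ H ×ₗ ℝ` with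
`x + y = y + x`, there is `d` with `0 < d ≤ x`, `d ≤ y` and `-x + d + x = -y + d + y`. -/
theorem lex_real_rdp_and_conjugate_lower_bounds {H : Type*}
    [AddGroup H] [PartialOrder H]
    [CovariantClass H H (· + ·) (· ≤ ·)]
    [CovariantClass H H (Function.swap (· + ·)) (· ≤ ·)]
    (hdir : ∀ x y : H, ∃ z : H, x ≤ z ∧ y ≤ z)
    (hH : RDP H) :
    RDP (H ×ₗ ℝ) ∧
    ∀ x y : H ×ₗ ℝ, 0 < x → 0 < y → x + y = y + x →
      ∃ d : H ×ₗ ℝ, 0 < d ∧ d ≤ x ∧ d ≤ y ∧ -x + d + x = -y + d + y :=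
  lex_real_rdp_and_conjugate_lower_bounds_general hH
end

section
/- Let G be a po-group with RDP such that for every equation u₁+u₂ = v₁+v₂ of elements of G there exists k ∈ G⁺ with v₂ ≤ u₁+k and (u₂−k)+(v₂−k) = (v₂−k)+(u₂−k). Then for every equation u₁+u₂ = v₁+v₂ of (arbitrary) elements of G there exist c₁₁,c₁₂,c₂₁,c₂₂ ∈ G with u₁ = c₁₁+c₁₂, u₂ = c₂₁+c₂₂, v₁ = c₁₁+c₂₁, v₂ = c₁₂+c₂₂, and c₁₁ ∈ G⁺ and c₂₂ ∈ G⁺. -/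
theorem AddCommute.eq_add_sub_add_sub {G : Type*} [AddGroup G] {u₁ u₂ v₁ v₂ k : G}
    (h : u₁ + u₂ = v₁ + v₂) (hk : AddCommute (u₂ - k) (v₂ - k)) :
    v₁ = (u₁ + k - v₂) + (u₂ - k) :=
  calc v₁ = u₁ + u₂ - v₂ := eq_sub_of_add_eq h.symm
    _ = u₁ + ((u₂ - k) - (v₂ - k)) := by rw [sub_sub_sub_cancel_right, add_sub_assoc]
    _ = u₁ + (-(v₂ - k) + (u₂ - k)) := by rw [sub_eq_add_neg, hk.neg_right.eq]
    _ = (u₁ + k - v₂) + (u₂ - k) := by rw [neg_sub, ← add_assoc, add_sub_assoc]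

theorem decomposition_with_positive_corners_general {G : Type*} [AddGroup G] [PartialOrder G]
    [CovariantClass G G (Function.swap (· + ·)) (· ≤ ·)]
    (hP : ∀ u₁ u₂ v₁ v₂ : G, u₁ + u₂ = v₁ + v₂ →
      ∃ k : G, 0 ≤ k ∧ v₂ ≤ u₁ + k ∧
        (u₂ - k) + (v₂ - k) = (v₂ - k) + (u₂ - k)) :
    ∀ u₁ u₂ v₁ v₂ : G, u₁ + u₂ = v₁ + v₂ →
      ∃ c₁₁ c₁₂ c₂₁ c₂₂ : G, u₁ = c₁₁ + c₁₂ ∧ u₂ = c₂₁ + c₂₂ ∧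
        v₁ = c₁₁ + c₂₁ ∧ v₂ = c₁₂ + c₂₂ ∧ 0 ≤ c₁₁ ∧ 0 ≤ c₂₂ := by
  intro u₁ u₂ v₁ v₂ h
  obtain ⟨k, hk_nonneg, hv₂_le, hk_comm⟩ := hP u₁ u₂ v₁ v₂ h
  refine ⟨u₁ + k - v₂, v₂ - k, u₂ - k, k, ?_, (sub_add_cancel u₂ k).symm,
    AddCommute.eq_add_sub_add_sub h hk_comm, (sub_add_cancel v₂ k).symm,
    sub_nonneg.mpr hv₂_le, hk_nonneg⟩
  rw [sub_add_sub_cancel, add_sub_cancel_right]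

/-- Let `G` be a po-group with RDP such that for every equation
`u₁ + u₂ = v₁ + v₂` there is `k ∈ G⁺` with `v₂ ≤ u₁ + k` and
`(u₂ - k) + (v₂ - k) = (v₂ - k) + (u₂ - k)`. Then every equation `u₁ + u₂ = v₁ + v₂` of
arbitrary elements of `G` admits a decomposition `c₁₁, c₁₂, c₂₁, c₂₂` with
`u₁ = c₁₁ + c₁₂`, `u₂ = c₂₁ + c₂₂`, `v₁ = c₁₁ + c₂₁`, `v₂ = c₁₂ + c₂₂` and
`c₁₁ ≥ 0`, `c₂₂ ≥ 0`. -/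
theorem decomposition_with_positive_corners {G : Type*} [AddGroup G] [PartialOrder G]
    [CovariantClass G G (· + ·) (· ≤ ·)]
    [CovariantClass G G (Function.swap (· + ·)) (· ≤ ·)]
    (hG : RDP G)
    (hP : ∀ u₁ u₂ v₁ v₂ : G, u₁ + u₂ = v₁ + v₂ →
      ∃ k : G, 0 ≤ k ∧ v₂ ≤ u₁ + k ∧
        (u₂ - k) + (v₂ - k) = (v₂ - k) + (u₂ - k)) :
    ∀ u₁ u₂ v₁ v₂ : G, u₁ + u₂ = v₁ + v₂ →
      ∃ c₁₁ c₁₂ c₂₁ c₂₂ : G, u₁ = c₁₁ + c₁₂ ∧ u₂ = c₂₁ + c₂₂ ∧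
        v₁ = c₁₁ + c₂₁ ∧ v₂ = c₁₂ + c₂₂ ∧ 0 ≤ c₁₁ ∧ 0 ≤ c₂₂ :=
  decomposition_with_positive_corners_general hP
end

section
/- Every directed Abelian po-group G has wRDP; that is, for all u₁,u₂,v₁,v₂ ∈ G with u₁+u₂ = v₁+v₂ there exist d₁,d₂ ∈ G with d₁ ≤ u₁, d₁ ≤ v₂, d₂ ≤ u₂, d₂ ≤ v₁, d₁+d₂ = d₂+d₁, and −u₁+v₁ = −d₁+d₂. -/
/-- In a po-group negation reverses the order, so upward directedness gives lower bounds. -/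
theorem exists_le_and_le_of_directed {G : Type*} [AddCommGroup G] [Preorder G] [AddLeftMono G]
    (hdir : ∀ x y : G, ∃ z : G, x ≤ z ∧ y ≤ z) (a b : G) : ∃ d : G, d ≤ a ∧ d ≤ b := by
  obtain ⟨z, hza, hzb⟩ := hdir (-a) (-b)
  exact ⟨-z, neg_le.mp hza, neg_le.mp hzb⟩

/-- Any common lower bound `d` of `u₁` and `v₂` works as `d₁`, with `d₂ := d - u₁ + v₁`. -/
theorem wRDP_of_exists_le_and_le {G : Type*} [AddCommGroup G] [PartialOrder G] [AddLeftMono G]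
    (hlb : ∀ a b : G, ∃ d : G, d ≤ a ∧ d ≤ b) : wRDP G := by
  intro u₁ u₂ v₁ v₂ h
  obtain ⟨d, hdu₁, hdv₂⟩ := hlb u₁ v₂
  have hu₂ : u₂ = v₁ - u₁ + v₂ := by
    rw [← add_sub_cancel_left u₁ u₂, h]
    abel
  refine ⟨d, d - u₁ + v₁, hdu₁, hdv₂, ?_, ?_, add_comm _ _, by abel⟩
  · calc d - u₁ + v₁ = v₁ - u₁ + d := by abel
      _ ≤ v₁ - u₁ + v₂ := by gcongr
      _ = u₂ := hu₂.symm
  · calc d - u₁ + v₁ ≤ u₁ - u₁ + v₁ := by gcongr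
      _ = v₁ := by abel

/-- Every directed Abelian po-group has wRDP. -/
theorem wRDP_of_directed_abelian {G : Type*} [AddCommGroup G] [PartialOrder G]
    [CovariantClass G G (· + ·) (· ≤ ·)]
    (hdir : ∀ x y : G, ∃ z : G, x ≤ z ∧ y ≤ z) :
    wRDP G :=
  wRDP_of_exists_le_and_le (exists_le_and_le_of_directed hdir)
end
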